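/- arXiv:2308.10083 — 6 statements merged into one kernel-verified Lean document; each statement's English description precedes it below -/
import Mathlib

section
/- Let N ≥ 1 and M_N = (m_0, …, m_N) ∈ ℂ^{N+1} with m_0 ∈ ℝ and (m_1, …, m_N) ≠ 0. Then the function r ↦ λ(r; N), where λ(r; N) is the minimum eigenvalue of the Hermitian Toeplitz matrix H_N(M_N^*(r)), is strictly increasing on the interval (0, 1]. -/
open ComplexOrder

/-- Extension of the moment sequence to `ℤ` by the convention `m_{−k} = conj(m_k)`. -/
noncomputable def mz (m : ℕ → ℂ) : ℤ → ℂ :=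
  fun k => if 0 ≤ k then m k.toNat else (starRingEnd ℂ) (m (-k).toNat)

/-- The Toeplitz matrix `H_N(M_N^*(r))` with entries `m_{k−j} r^{−|k−j|}`. -/
noncomputable def toeplitzStar (N : ℕ) (m : ℕ → ℂ) (r : ℝ) :
    Matrix (Fin (N + 1)) (Fin (N + 1)) ℂ :=
  fun j k => mz m ((k : ℤ) - (j : ℤ)) * (r : ℂ) ^ (-(((k : ℤ) - (j : ℤ)).natAbs : ℤ))

/-!
For `r < s` put `t = r / s`. Entrywise, `H_N(M_N^*(s)) = H_N(M_N^*(r)) ⊙ K` with the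
Kac–Murdock–Szegő matrix `K_{jk} = t^{|j-k|}`, which is positive definite because
`K = L D Lᵀ` with `L` unit lower triangular and `D = diag(1, 1 - t², …, 1 - t²)`.
So `K - δ • 1` is positive semidefinite for some `δ > 0`, and by the Schur product theorem
`A ⊙ K - δ • diag A` is positive semidefinite for `A = H_N(M_N^*(r)) - λ(r) • 1`.
The diagonal of `A` is the constant `m_0 - λ(r)`; it is positive, since otherwise `A`
would be a positive semidefinite matrix of trace zero, hence zero, contradicting `m_k ≠ 0`.
Thus `H_N(M_N^*(s)) - (λ(r) + δ (m_0 - λ(r))) • 1` is positive semidefinite, and evaluating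
its quadratic form at a null vector of `H_N(M_N^*(s)) - λ(s) • 1` gives
`λ(s) ≥ λ(r) + δ (m_0 - λ(r)) > λ(r)`.
-/

open Matrix
open scoped MatrixOrder

section KacMurdockSzego

variable {R : Type*} [CommRing R]

def kmsMatrix (n : ℕ) (x : R) : Matrix (Fin n) (Fin n) R :=
  of fun j k => x ^ ((k : ℤ) - j).natAbs

def kmsLower (n : ℕ) (x : R) : Matrix (Fin n) (Fin n) R :=
  of fun j i => if i ≤ j then x ^ ((j : ℕ) - i) else 0

def kmsPivot (x : R) (i : ℕ) : R :=
  if i = 0 then 1 else 1 - x ^ 2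

theorem sum_range_kmsPivot_mul_pow (x : R) (j m : ℕ) :
    ∑ i ∈ Finset.range (j + 1), kmsPivot x i * (x ^ (j - i) * x ^ (j + m - i)) = x ^ m := by
  induction j with
  | zero => simp [kmsPivot]
  | succ j ih =>
    have hshift : ∀ i ∈ Finset.range (j + 1),
        kmsPivot x i * (x ^ (j + 1 - i) * x ^ (j + 1 + m - i))
          = x ^ 2 * (kmsPivot x i * (x ^ (j - i) * x ^ (j + m - i))) := by
      intro i hi
      rw [Finset.mem_range] at hi
      rw [show j + 1 - i = j - i + 1 by omega, show j + 1 + m - i = j + m - i + 1 by omega]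
      ring
    rw [Finset.sum_range_succ, Finset.sum_congr rfl hshift, ← Finset.mul_sum, ih, kmsPivot,
      if_neg j.succ_ne_zero, Nat.sub_self, Nat.add_sub_cancel_left]
    ring

theorem kmsLower_mul_diagonal_mul_transpose_apply_of_le {n : ℕ} (x : R) {j k : Fin n}
    (hjk : j ≤ k) :
    (kmsLower n x * diagonal (fun i : Fin n => kmsPivot x i) * (kmsLower n x)ᵀ) j k
      = x ^ ((k : ℕ) - j) := by
  rw [mul_apply]
  simp only [kmsLower, of_apply, mul_diagonal, transpose_apply, Fin.le_def]
  rw [Fin.sum_univ_eq_sum_range (fun i => (if i ≤ j then x ^ ((j : ℕ) - i) else 0) *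
      kmsPivot x i * (if i ≤ k then x ^ ((k : ℕ) - i) else 0)),
    ← Finset.sum_subset (Finset.range_subset_range.2 j.2) fun i _ hi => ?_]
  · rw [← sum_range_kmsPivot_mul_pow x j (k - j)]
    refine Finset.sum_congr rfl fun i hi => ?_
    rw [Finset.mem_range] at hi
    rw [if_pos (by omega), if_pos (by omega), show (j : ℕ) + (k - j) - i = k - i by omega]
    ring
  · rw [Finset.mem_range] at hi
    rw [if_neg (by omega), zero_mul, zero_mul]

theorem kmsMatrix_eq_kmsLower_mul_diagonal_mul_transpose (n : ℕ) (x : R) :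
    kmsMatrix n x = kmsLower n x * diagonal (fun i : Fin n => kmsPivot x i) * (kmsLower n x)ᵀ := by
  have hsymm : (kmsLower n x * diagonal (fun i : Fin n => kmsPivot x i) * (kmsLower n x)ᵀ)ᵀ
      = kmsLower n x * diagonal (fun i : Fin n => kmsPivot x i) * (kmsLower n x)ᵀ := by
    rw [transpose_mul, transpose_mul, transpose_transpose, diagonal_transpose, Matrix.mul_assoc]
  ext j k
  rcases le_total j k with hjk | hkj
  · rw [kmsLower_mul_diagonal_mul_transpose_apply_of_le x hjk, kmsMatrix, of_apply]
    congr 1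
    omega
  · rw [← hsymm, transpose_apply, kmsLower_mul_diagonal_mul_transpose_apply_of_le x hkj,
      kmsMatrix, of_apply]
    congr 1
    omega

theorem det_kmsLower (n : ℕ) (x : R) : (kmsLower n x).det = 1 := by
  rw [det_of_isLowerTriangular _ fun i j hij => ?_]
  · simp [kmsLower]
  · exact if_neg (not_le.2 (by simpa using hij))

theorem kmsMatrix_posDef {𝕜 : Type*} [RCLike 𝕜] (n : ℕ) {t : ℝ} (ht : |t| < 1) :
    (kmsMatrix n (t : 𝕜)).PosDef := by
  have hpivot (i : Fin n) : 0 < kmsPivot (t : 𝕜) i := by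
    unfold kmsPivot
    split_ifs
    · exact one_pos
    · exact_mod_cast sub_pos.2 ((sq_lt_one_iff_abs_lt_one t).2 ht)
  have hstar : (kmsLower n (t : 𝕜))ᵀ = (kmsLower n (t : 𝕜))ᴴ := by
    ext i j
    simp [kmsLower, apply_ite star]
  rw [kmsMatrix_eq_kmsLower_mul_diagonal_mul_transpose, hstar]
  refine PosDef.mul_mul_conjTranspose_same (posDef_diagonal_iff.2 hpivot) ?_
  rw [vecMul_injective_iff_isUnit, isUnit_iff_isUnit_det, det_kmsLower]
  exact isUnit_one

end KacMurdockSzego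

namespace Matrix

variable {n 𝕜 : Type*} [Fintype n] [DecidableEq n] [RCLike 𝕜]

theorem PosDef.exists_posSemidef_sub_smul_one [Nonempty n] {B : Matrix n n 𝕜} (hB : B.PosDef) :
    ∃ δ > (0 : ℝ), (B - (δ : 𝕜) • 1).PosSemidef := by
  obtain ⟨δ, hδ, hle⟩ := (CFC.exists_pos_algebraMap_le_iff hB.isHermitian.isSelfAdjoint).2
    fun x hx => hB.isStrictlyPositive.spectrum_pos hx
  refine ⟨δ, hδ, ?_⟩
  rw [← RCLike.real_smul_eq_coe_smul, ← Algebra.algebraMap_eq_smul_one]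
  exact Matrix.le_iff.1 hle

theorem PosSemidef.exists_posSemidef_hadamard_sub_diagonal [Nonempty n] {A B : Matrix n n 𝕜}
    (hA : A.PosSemidef) (hB : B.PosDef) :
    ∃ δ > (0 : ℝ), (A ⊙ B - (δ : 𝕜) • diagonal A.diag).PosSemidef := by
  obtain ⟨δ, hδ, hBδ⟩ := hB.exists_posSemidef_sub_smul_one
  refine ⟨δ, hδ, ?_⟩
  have : A ⊙ B - (δ : 𝕜) • diagonal A.diag = A ⊙ (B - (δ : 𝕜) • 1) := by
    rw [← hadamard_one, ← hadamard_smul]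
    ext i j
    simp [mul_sub]
  exact this ▸ hA.hadamard hBδ

theorem le_of_posSemidef_sub_smul_one_of_mulVec_eq_zero {H : Matrix n n 𝕜} {a b : ℝ}
    (ha : (H - (a : 𝕜) • 1).PosSemidef) {v : n → 𝕜} (hv : v ≠ 0)
    (hb : (H - (b : 𝕜) • 1) *ᵥ v = 0) : a ≤ b := by
  have hHv : H *ᵥ v = (b : 𝕜) • v := by
    rwa [sub_mulVec, smul_mulVec, one_mulVec, sub_eq_zero] at hb
  have hq : star v ⬝ᵥ (H - (a : 𝕜) • 1) *ᵥ v = ((b - a : ℝ) : 𝕜) * (star v ⬝ᵥ v) := by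
    rw [sub_mulVec, smul_mulVec, one_mulVec, hHv, dotProduct_sub, dotProduct_smul,
      dotProduct_smul, smul_eq_mul, smul_eq_mul]
    push_cast
    ring
  have h0 := ha.dotProduct_mulVec_nonneg v
  rw [hq] at h0
  have hpos : 0 < star v ⬝ᵥ v := dotProduct_star_self_pos_iff.2 hv
  by_contra! hab
  have : ((b - a : ℝ) : 𝕜) * (star v ⬝ᵥ v) < 0 :=
    mul_neg_of_neg_of_pos (by exact_mod_cast sub_neg.2 hab) hpos
  exact this.not_ge h0

end Matrix

theorem diag_toeplitzStar_sub_smul_one (N : ℕ) (m : ℕ → ℂ) (r : ℝ) (c : ℂ) :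
    (toeplitzStar N m r - c • 1).diag = fun _ => m 0 - c := by
  ext j
  simp [toeplitzStar, mz]

theorem toeplitzStar_sub_smul_one_hadamard_kmsMatrix (N : ℕ) (m : ℕ → ℂ) {r s : ℝ}
    (hr : r ≠ 0) (hs : s ≠ 0) (c : ℂ) :
    (toeplitzStar N m r - c • 1) ⊙ kmsMatrix (N + 1) ((r / s : ℝ) : ℂ)
      = toeplitzStar N m s - c • 1 := by
  ext j k
  rcases eq_or_ne j k with rfl | hjk
  · simp [kmsMatrix, hadamard, toeplitzStar, mz]
  · simp only [hadamard, toeplitzStar, kmsMatrix, of_apply, Matrix.sub_apply, Matrix.smul_apply,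
      one_apply_ne hjk, smul_zero, sub_zero, _root_.zpow_neg, zpow_natCast]
    push_cast
    rw [div_pow]
    field_simp

theorem sub_pos_of_posSemidef_toeplitzStar_sub_smul_one {N : ℕ} {m : ℕ → ℂ} {r : ℝ} (hr : r ≠ 0)
    (hm : ∃ k, 1 ≤ k ∧ k ≤ N ∧ m k ≠ 0) {c : ℂ}
    (hA : (toeplitzStar N m r - c • 1).PosSemidef) : 0 < m 0 - c := by
  have hdiag := diag_toeplitzStar_sub_smul_one N m r c
  refine lt_of_le_of_ne (congr_fun hdiag 0 ▸ hA.diag_nonneg) fun h0 => ?_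
  obtain ⟨k, hk1, hkN, hmk⟩ := hm
  have hA0 : toeplitzStar N m r - c • 1 = 0 :=
    hA.trace_eq_zero_iff.1 (by simp only [trace, hdiag, ← h0, Finset.sum_const_zero])
  have h0k := congr_fun₂ hA0 0 ⟨k, by omega⟩
  exact hmk (by simpa [toeplitzStar, mz, one_apply, Fin.ext_iff, hr, show 0 ≠ k by omega] using h0k)

theorem min_eigenvalue_strictMono_general (N : ℕ) (m : ℕ → ℂ)
    (hm : ∃ k, 1 ≤ k ∧ k ≤ N ∧ m k ≠ 0)
    (lam : ℝ → ℝ)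
    (hlam : ∀ r ∈ Set.Ioc (0 : ℝ) 1,
      (toeplitzStar N m r - (lam r : ℂ) • (1 : Matrix (Fin (N + 1)) (Fin (N + 1)) ℂ)).PosSemidef ∧
      ∃ v : Fin (N + 1) → ℂ, v ≠ 0 ∧
        (toeplitzStar N m r - (lam r : ℂ) • 1).mulVec v = 0) :
    StrictMonoOn lam (Set.Ioc 0 1) := by
  intro r hr s hs hrs
  obtain ⟨hA, -⟩ := hlam r hr
  obtain ⟨-, v, hv, hsv⟩ := hlam s hs
  obtain ⟨d, hd, hdA⟩ :=
    RCLike.pos_iff_exists_ofReal.1 (sub_pos_of_posSemidef_toeplitzStar_sub_smul_one hr.1.ne' hm hA)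
  have hK : (kmsMatrix (N + 1) ((r / s : ℝ) : ℂ)).PosDef := kmsMatrix_posDef (t := r / s) _ (by
    rw [abs_of_pos (div_pos hr.1 hs.1)]
    exact (div_lt_one hs.1).2 hrs)
  obtain ⟨δ, hδ, hAK⟩ := hA.exists_posSemidef_hadamard_sub_diagonal hK
  simp only [RCLike.ofReal_eq_complex_ofReal] at hdA hAK
  rw [toeplitzStar_sub_smul_one_hadamard_kmsMatrix N m hr.1.ne' hs.1.ne',
    diag_toeplitzStar_sub_smul_one, ← hdA, ← smul_one_eq_diagonal, smul_smul, sub_sub,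
    ← add_smul] at hAK
  have := le_of_posSemidef_sub_smul_one_of_mulVec_eq_zero (a := lam r + δ * d)
    (by exact_mod_cast hAK) hv hsv
  linarith [mul_pos hδ hd]

/-- If `m_0 ∈ ℝ` and `(m_1, …, m_N) ≠ 0`, then the minimum eigenvalue `λ(r; N)` of the
Hermitian Toeplitz matrix `H_N(M_N^*(r))` is strictly increasing on `(0, 1]`.  Here `lam r`
being the minimum eigenvalue is expressed by the fact that `H_N(M_N^*(r)) − lam r • 1` is
positive semi-definite and singular. -/
theorem min_eigenvalue_strictMono (N : ℕ) (hN : 1 ≤ N) (m : ℕ → ℂ)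
    (hm0 : (m 0).im = 0) (hm : ∃ k, 1 ≤ k ∧ k ≤ N ∧ m k ≠ 0)
    (lam : ℝ → ℝ)
    (hlam : ∀ r ∈ Set.Ioc (0 : ℝ) 1,
      (toeplitzStar N m r - (lam r : ℂ) • (1 : Matrix (Fin (N + 1)) (Fin (N + 1)) ℂ)).PosSemidef ∧
      ∃ v : Fin (N + 1) → ℂ, v ≠ 0 ∧
        (toeplitzStar N m r - (lam r : ℂ) • 1).mulVec v = 0) :
    StrictMonoOn lam (Set.Ioc 0 1) :=
  min_eigenvalue_strictMono_general N m hm lam hlam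
end

section
/- Let N ≥ 0 and let ν be a finite positive Borel measure on the unit circle 𝕋 whose support contains at least N+1 distinct points. If m_k = ∫_𝕋 z^k dν(z) for k = 0, …, N, then the Toeplitz matrix H_N(M_N) with M_N = (m_0, …, m_N) is positive definite. -/
/-!
On the unit circle `conj z = z⁻¹`, so `∫ conj (z ^ j) * z ^ k dν = ∫ z ^ (k - j) dν`, which is
`m_{k-j}`: the Toeplitz matrix is the Gram matrix of the monomials `1, z, …, z^N` in `L²(ν)`,
and it is positive definite as soon as these monomials are linearly independent in `L²(ν)`. A combination
`p = ∑ c_k z^k` vanishing `ν`-a.e. vanishes on the closed support of `ν`, hence at `N + 1`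
distinct points, so `c = 0` by the invertibility of the Vandermonde matrix.
-/

open MeasureTheory ComplexOrder

/-- The Toeplitz matrix `H_N(M)` with entries `(H_N)_{jk} = m_{k−j}`. -/
noncomputable def toeplitz (N : ℕ) (m : ℕ → ℂ) : Matrix (Fin (N + 1)) (Fin (N + 1)) ℂ :=
  fun j k => mz m ((k : ℤ) - (j : ℤ))

open scoped ENNReal ComplexConjugate InnerProductSpace

namespace Complex

lemma zpow_sub_natCast_of_norm_eq_one {z : ℂ} (hz : ‖z‖ = 1) (j k : ℕ) :
    z ^ ((k : ℤ) - j) = conj (z ^ j) * z ^ k := by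
  rw [zpow_sub₀ (norm_ne_zero_iff.mp (hz ▸ one_ne_zero)), zpow_natCast, zpow_natCast,
    map_pow, ← inv_eq_conj hz, inv_pow, div_eq_inv_mul]

end Complex

section CircleMeasure

variable {ν : Measure ℂ}

lemma mz_eq_integral_zpow {N : ℕ} {m : ℕ → ℂ} (hν : ∀ᵐ z ∂ν, ‖z‖ = 1)
    (hmom : ∀ k ≤ N, m k = ∫ z, z ^ k ∂ν) {n : ℤ} (hn : |n| ≤ N) :
    mz m n = ∫ z, z ^ n ∂ν := by
  obtain ⟨hn₁, hn₂⟩ := abs_le.mp hn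
  unfold mz
  split_ifs with h
  · lift n to ℕ using h
    simp_rw [Int.toNat_natCast, zpow_natCast]
    exact hmom n (by omega)
  · obtain ⟨k, rfl⟩ : ∃ k : ℕ, n = -k := ⟨(-n).toNat, by omega⟩
    rw [neg_neg, Int.toNat_natCast, hmom k (by omega), ← integral_conj]
    refine integral_congr_ae ?_
    filter_upwards [hν] with z hz
    rw [zpow_neg, zpow_natCast, map_pow, ← Complex.inv_eq_conj hz, inv_pow]

lemma memLp_pow_of_ae_norm_eq_one [IsFiniteMeasure ν] (hν : ∀ᵐ z ∂ν, ‖z‖ = 1)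
    (p : ℝ≥0∞) (k : ℕ) : MemLp (· ^ k) p ν :=
  MemLp.of_bound (continuous_pow k).aestronglyMeasurable 1 <| by
    filter_upwards [hν] with z hz
    simp [hz]

variable [IsFiniteMeasure ν] (hν : ∀ᵐ z ∂ν, ‖z‖ = 1)

noncomputable def monomialLp (p : ℝ≥0∞) (k : ℕ) : Lp ℂ p ν :=
  (memLp_pow_of_ae_norm_eq_one hν p k).toLp (· ^ k)

lemma inner_monomialLp (j k : ℕ) :
    ⟪monomialLp hν 2 j, monomialLp hν 2 k⟫_ℂ = ∫ z, z ^ ((k : ℤ) - j) ∂ν := by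
  rw [L2.inner_def]
  refine integral_congr_ae ?_
  filter_upwards [MemLp.coeFn_toLp (memLp_pow_of_ae_norm_eq_one hν 2 j),
    MemLp.coeFn_toLp (memLp_pow_of_ae_norm_eq_one hν 2 k), hν] with z hj hk hz
  rw [monomialLp, monomialLp, hj, hk, RCLike.inner_apply',
    Complex.zpow_sub_natCast_of_norm_eq_one hz]

lemma toeplitz_eq_gram {N : ℕ} {m : ℕ → ℂ} (hmom : ∀ k ≤ N, m k = ∫ z, z ^ k ∂ν) :
    toeplitz N m = Matrix.gram ℂ fun k : Fin (N + 1) ↦ monomialLp hν 2 k := by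
  ext j k
  have hjk : |(k : ℤ) - j| ≤ N := abs_le.mpr ⟨by omega, by omega⟩
  rw [Matrix.gram_apply, inner_monomialLp, toeplitz, mz_eq_integral_zpow hν hmom hjk]

lemma linearIndependent_monomialLp (p : ℝ≥0∞) [Fact (1 ≤ p)] {n : ℕ} {z : Fin n → ℂ}
    (hz : Function.Injective z) (hz_supp : ∀ α, z α ∈ ν.support) :
    LinearIndependent ℂ fun k : Fin n ↦ monomialLp hν p k := by
  rw [Fintype.linearIndependent_iff]
  intro c hc
  have hsum := Lp.coeFn_fun_finsetSum Finset.univ fun k : Fin n ↦ c k • monomialLp hν p k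
  rw [hc] at hsum
  have hterm : ∀ᵐ w ∂ν, ∀ k : Fin n, (c k • monomialLp hν p k) w = c k * w ^ (k : ℕ) :=
    ae_all_iff.mpr fun k ↦ by
      filter_upwards [Lp.coeFn_smul (c k) (monomialLp hν p k),
        MemLp.coeFn_toLp (memLp_pow_of_ae_norm_eq_one hν p k)] with w hs hm
      rw [hs, Pi.smul_apply, monomialLp, hm, smul_eq_mul]
  have hpoly : ∀ᵐ w ∂ν, ∑ k : Fin n, c k * w ^ (k : ℕ) = 0 := by
    filter_upwards [hsum, hterm, Lp.coeFn_zero ℂ p ν] with w hs ht h0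
    simp_rw [← ht, ← hs, h0, Pi.zero_apply]
  have hclosed : IsClosed {w : ℂ | ∑ k : Fin n, c k * w ^ (k : ℕ) = 0} :=
    isClosed_eq (by fun_prop) continuous_const
  have hvanish := Measure.support_subset_of_isClosed hclosed hpoly
  exact congrFun <|
    Matrix.eq_zero_of_forall_index_sum_mul_pow_eq_zero hz fun α ↦ hvanish (hz_supp α)

end CircleMeasure

/-- If `ν` is a nonzero finite positive Borel measure concentrated on the unit circle whose
support contains at least `N+1` distinct points, and `m_k = ∫ z^k dν` for `k ≤ N`, then the
Toeplitz matrix `H_N(M_N)` is positive definite. -/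
theorem toeplitz_posDef_of_support (N : ℕ) (m : ℕ → ℂ) (ν : Measure ℂ)
    [IsFiniteMeasure ν]
    (hcirc : ∀ᵐ z ∂ν, ‖z‖ = 1)
    (hsupp : ∃ z : Fin (N + 1) → ℂ, Function.Injective z ∧
      ∀ α, ∀ U : Set ℂ, IsOpen U → z α ∈ U → 0 < ν U)
    (hmom : ∀ k ≤ N, m k = ∫ z, z ^ k ∂ν) :
    (toeplitz N m).PosDef := by
  obtain ⟨z, hz, hz_supp⟩ := hsupp
  have hz_mem : ∀ α, z α ∈ ν.support := fun α ↦ by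
    rw [Measure.support_eq_forall_isOpen]
    exact fun U hU hU_open ↦ hz_supp α U hU_open hU
  rw [toeplitz_eq_gram hcirc hmom]
  exact Matrix.posDef_gram_of_linearIndependent <|
    linearIndependent_monomialLp hcirc 2 hz hz_mem
end

section
/- Let c_0 > 0 and c_1, s_1 ∈ ℝ satisfy (c_1² + s_1²)/c_0² < 1. Define the 3×3 real matrices A_x = [[0, 1, 0], [1/2 − (c_1² − s_1²)/(2c_0²), c_1/c_0, −s_1/c_0], [−c_1 s_1/c_0², s_1/c_0, c_1/c_0]] and A_y = [[0, 0, 1], [−c_1 s_1/c_0², s_1/c_0, c_1/c_0], [1/2 + (c_1² − s_1²)/(2c_0²), −c_1/c_0, s_1/c_0]]. Then for every (a, b) ∈ ℝ² with a² + b² > 0, the matrix a·A_x + b·A_y has three distinct real eigenvalues. -/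
open Matrix Polynomial

/-- The `x`-direction flux Jacobian of the single-node Poisson-EQMOM system. -/
noncomputable def Ax (c0 c1 s1 : ℝ) : Matrix (Fin 3) (Fin 3) ℝ :=
  !![0, 1, 0;
     1 / 2 - (c1 ^ 2 - s1 ^ 2) / (2 * c0 ^ 2), c1 / c0, -s1 / c0;
     -(c1 * s1) / c0 ^ 2, s1 / c0, c1 / c0]

/-- The `y`-direction flux Jacobian of the single-node Poisson-EQMOM system. -/
noncomputable def Ay (c0 c1 s1 : ℝ) : Matrix (Fin 3) (Fin 3) ℝ :=
  !![0, 0, 1;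
     -(c1 * s1) / c0 ^ 2, s1 / c0, c1 / c0;
     1 / 2 + (c1 ^ 2 - s1 ^ 2) / (2 * c0 ^ 2), -c1 / c0, s1 / c0]

/-! With `m = (a c₁ + b s₁)/c₀` and `q = (a² + b²)(1 - r²)/2`, the characteristic polynomial of
`a·A_x + b·A_y` factors as `(X - m)(X² - m X - q)`. Since `r < 1` and `(a, b) ≠ 0` give `q > 0`,
the quadratic factor has positive discriminant `m² + 4q` and does not vanish at `m` (its value
there is `-q`), so the three roots are real and distinct. -/

theorem Matrix.charpoly_fin_three {R : Type*} [CommRing R] (M : Matrix (Fin 3) (Fin 3) R) :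
    M.charpoly =
      (X - C (M 0 0)) * (X - C (M 1 1)) * (X - C (M 2 2))
      - C (M 0 1) * C (M 1 0) * (X - C (M 2 2))
      - C (M 0 2) * C (M 2 0) * (X - C (M 1 1))
      - C (M 1 2) * C (M 2 1) * (X - C (M 0 0))
      - C (M 0 1) * C (M 1 2) * C (M 2 0)
      - C (M 0 2) * C (M 1 0) * C (M 2 1) := by
  simp only [charpoly, det_fin_three, charmatrix_apply, diagonal_apply, Fin.isValue,
    Fin.reduceEq, if_true, if_false]
  ring

theorem X_sub_C_mul_X_sub_C {R : Type*} [CommRing R] (x y : R) :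
    (X - C x) * (X - C y) = X ^ 2 - C (x + y) * X + C (x * y) := by
  simp only [map_add, map_mul]
  ring

theorem exists_distinct_roots_X_sub_C_mul_quadratic (p q : ℝ) (hq : 0 < q) :
    ∃ l1 l2 l3 : ℝ, l1 ≠ l2 ∧ l1 ≠ l3 ∧ l2 ≠ l3 ∧
      (X - C p) * (X ^ 2 - C p * X - C q) = (X - C l1) * (X - C l2) * (X - C l3) := by
  set s := √(p ^ 2 + 4 * q)
  have hs2 : s ^ 2 = p ^ 2 + 4 * q := Real.sq_sqrt (by positivity)
  have hs : 0 < s := Real.sqrt_pos.mpr (by positivity)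
  refine ⟨p, (p - s) / 2, (p + s) / 2, ?_, ?_, ?_, ?_⟩
  · intro h
    nlinarith
  · intro h
    nlinarith
  · intro h
    linarith
  · have hsum : (p - s) / 2 + (p + s) / 2 = p := by ring
    have hprod : (p - s) / 2 * ((p + s) / 2) = -q := by linear_combination -hs2 / 4
    rw [mul_assoc, X_sub_C_mul_X_sub_C, hsum, hprod, map_neg, ← sub_eq_add_neg]

theorem charpoly_smul_Ax_add_smul_Ay (c0 c1 s1 a b : ℝ) (hc0 : c0 ≠ 0) :
    (a • Ax c0 c1 s1 + b • Ay c0 c1 s1).charpoly =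
      (X - C ((a * c1 + b * s1) / c0)) *
        (X ^ 2 - C ((a * c1 + b * s1) / c0) * X
          - C ((a ^ 2 + b ^ 2) * (1 - (c1 ^ 2 + s1 ^ 2) / c0 ^ 2) / 2)) := by
  rw [charpoly_fin_three]
  apply Polynomial.funext
  intro x
  simp only [Ax, Ay, one_div, smul_of, smul_cons, smul_eq_mul, mul_zero, mul_one, smul_empty,
    Fin.isValue, Matrix.add_apply, of_apply, cons_val', cons_val_zero, cons_val_fin_one, add_zero,
    map_zero, sub_zero, cons_val_one, map_add, map_mul, cons_val, map_sub, zero_add, eval_sub,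
    eval_mul, eval_X, eval_add, eval_C, eval_pow]
  field_simp
  ring

/-- If `(c1² + s1²)/c0² < 1`, then for every `(a,b) ≠ (0,0)` the matrix
`a·Ax + b·Ay` has three distinct real eigenvalues (strict hyperbolicity). -/
theorem strict_hyperbolicity (c0 c1 s1 : ℝ) (hc0 : 0 < c0)
    (hr : (c1 ^ 2 + s1 ^ 2) / c0 ^ 2 < 1) (a b : ℝ) (hab : 0 < a ^ 2 + b ^ 2) :
    ∃ l1 l2 l3 : ℝ, l1 ≠ l2 ∧ l1 ≠ l3 ∧ l2 ≠ l3 ∧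
      (a • Ax c0 c1 s1 + b • Ay c0 c1 s1).charpoly =
        (X - C l1) * (X - C l2) * (X - C l3) := by
  rw [charpoly_smul_Ax_add_smul_Ay c0 c1 s1 a b hc0.ne']
  apply exists_distinct_roots_X_sub_C_mul_quadratic
  have : 0 < 1 - (c1 ^ 2 + s1 ^ 2) / c0 ^ 2 := sub_pos.mpr hr
  positivity
end

section
/- Let c_0 > 0 and c_1, s_1 ∈ ℝ, set r² = (c_1² + s_1²)/c_0², and define the 3×3 real matrices A_x = [[0, 1, 0], [1/2 − (c_1² − s_1²)/(2c_0²), c_1/c_0, −s_1/c_0], [−c_1 s_1/c_0², s_1/c_0, c_1/c_0]] and A_y = [[0, 0, 1], [−c_1 s_1/c_0², s_1/c_0, c_1/c_0], [1/2 + (c_1² − s_1²)/(2c_0²), −c_1/c_0, s_1/c_0]]. Then for all a, b ∈ ℝ, the characteristic polynomial of a·A_x + b·A_y is p(λ) = (λ − (a c_1 + b s_1)/c_0) · (λ² − ((a c_1 + b s_1)/c_0) λ − ((a² + b²)/2)(1 − r²)). -/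
open Matrix Polynomial

/-! Every entry of `Ax` and `Ay` is a polynomial in `c1 / c0` and `s1 / c0`, so the trace, the
sum of principal 2×2 minors and the determinant of `a • Ax + b • Ay` are polynomials in these
ratios: `2u`, `u² - k` and `-uk`, with `u = (a c1 + b s1)/c0` and `k = (a² + b²)/2 · (1 - r²)`.
These are exactly the coefficients of `(λ - u)(λ² - uλ - k)`. -/

namespace Matrix

variable {R : Type*} [CommRing R]

def sumPrincipalMinorsTwo (M : Matrix (Fin 3) (Fin 3) R) : R :=
  M 0 0 * M 1 1 - M 0 1 * M 1 0 + M 0 0 * M 2 2 - M 0 2 * M 2 0 +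
    M 1 1 * M 2 2 - M 1 2 * M 2 1

theorem charpoly_fin_three_s11 (M : Matrix (Fin 3) (Fin 3) R) :
    M.charpoly =
      X ^ 3 - C M.trace * X ^ 2 + C M.sumPrincipalMinorsTwo * X - C M.det := by
  simp only [charpoly, det_fin_three, trace_fin_three, sumPrincipalMinorsTwo, charmatrix_apply,
    diagonal_apply, Fin.isValue, Fin.reduceEq, if_true, if_false, map_add, map_sub, map_mul]
  ring

end Matrix

section FluxJacobian

variable (c0 c1 s1 a b : ℝ)

theorem trace_smul_Ax_add_smul_Ay :
    (a • Ax c0 c1 s1 + b • Ay c0 c1 s1).trace = 2 * ((a * c1 + b * s1) / c0) := by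
  rw [trace_fin_three]
  simp only [Ax, Ay, Matrix.add_apply, Matrix.smul_apply, smul_eq_mul, of_apply, cons_val', cons_val,
    cons_val_fin_one]
  ring

theorem sumPrincipalMinorsTwo_smul_Ax_add_smul_Ay :
    (a • Ax c0 c1 s1 + b • Ay c0 c1 s1).sumPrincipalMinorsTwo =
      ((a * c1 + b * s1) / c0) ^ 2 - (a ^ 2 + b ^ 2) / 2 * (1 - (c1 ^ 2 + s1 ^ 2) / c0 ^ 2) := by
  rw [sumPrincipalMinorsTwo]
  simp only [Ax, Ay, Matrix.add_apply, Matrix.smul_apply, smul_eq_mul, of_apply, cons_val', cons_val,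
    cons_val_fin_one]
  ring

theorem det_smul_Ax_add_smul_Ay :
    (a • Ax c0 c1 s1 + b • Ay c0 c1 s1).det =
      -((a * c1 + b * s1) / c0 * ((a ^ 2 + b ^ 2) / 2 * (1 - (c1 ^ 2 + s1 ^ 2) / c0 ^ 2))) := by
  rw [det_fin_three]
  simp only [Ax, Ay, Matrix.add_apply, Matrix.smul_apply, smul_eq_mul, of_apply, cons_val', cons_val,
    cons_val_fin_one]
  ring

end FluxJacobian

theorem charpoly_eq_general (c0 c1 s1 : ℝ) (a b : ℝ) :
    (a • Ax c0 c1 s1 + b • Ay c0 c1 s1).charpoly =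
      (X - C ((a * c1 + b * s1) / c0)) *
        (X ^ 2 - C ((a * c1 + b * s1) / c0) * X -
          C ((a ^ 2 + b ^ 2) / 2 * (1 - (c1 ^ 2 + s1 ^ 2) / c0 ^ 2))) := by
  rw [charpoly_fin_three_s11, trace_smul_Ax_add_smul_Ay, sumPrincipalMinorsTwo_smul_Ax_add_smul_Ay,
    det_smul_Ax_add_smul_Ay]
  simp only [map_neg, map_mul, map_sub, map_pow, map_ofNat]
  ring

/-- With `r² = (c1² + s1²)/c0²`, the characteristic polynomial of `a·Ax + b·Ay` is
`(λ − (a c1 + b s1)/c0)(λ² − ((a c1 + b s1)/c0) λ − ((a² + b²)/2)(1 − r²))`. -/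
theorem charpoly_eq (c0 c1 s1 : ℝ) (hc0 : 0 < c0) (a b : ℝ) :
    (a • Ax c0 c1 s1 + b • Ay c0 c1 s1).charpoly =
      (X - C ((a * c1 + b * s1) / c0)) *
        (X ^ 2 - C ((a * c1 + b * s1) / c0) * X -
          C ((a ^ 2 + b ^ 2) / 2 * (1 - (c1 ^ 2 + s1 ^ 2) / c0 ^ 2))) :=
  charpoly_eq_general c0 c1 s1 a b
end

section
/- Let d > 0, ν > 0, θ̄ ∈ ℝ, C > 0, and let M(θ) = C exp(ν cos(θ − θ̄)/d) be the von Mises density. Then for every smooth 2π-periodic function f : ℝ → ℝ, the quantity H(f) = ∫_{−π}^{π} [ d f''(θ) + ν (d/dθ)( sin(θ − θ̄) f(θ) ) ] · (f(θ)/M(θ)) dθ satisfies H(f) ≤ 0. -/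
open Real intervalIntegral

/-- Entropy dissipation for the Vicsek collision operator: with the von Mises density
`M(θ) = C exp(ν cos(θ − θ̄)/d)` and a smooth `2π`-periodic `f`,
`H(f) = ∫_{−π}^{π} [d f'' + ν ∂_θ(sin(θ − θ̄) f)] (f/M) dθ ≤ 0`. -/
theorem vicsek_entropy_dissipation (d ν C θb : ℝ) (hd : 0 < d) (hν : 0 < ν) (hC : 0 < C)
    (f : ℝ → ℝ) (hf : ContDiff ℝ (⊤ : ℕ∞) f) (hper : Function.Periodic f (2 * Real.pi)) :
    (∫ θ in (-Real.pi)..Real.pi,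
        (d * deriv (deriv f) θ + ν * deriv (fun t => Real.sin (t - θb) * f t) θ) *
          (f θ / (C * Real.exp (ν * Real.cos (θ - θb) / d)))) ≤ 0 := by
  set M : ℝ → ℝ := fun t => C * Real.exp (ν * Real.cos (t - θb) / d) with hMdef
  have hMpos : ∀ t, 0 < M t := fun t => by positivity
  have hMne : ∀ t, M t ≠ 0 := fun t => (hMpos t).ne'
  set M' : ℝ → ℝ := fun t => M t * (ν * -Real.sin (t - θb) / d) with hM'def
  have hM : ∀ t, HasDerivAt M (M' t) t := by
    intro t
    have h1 : HasDerivAt (fun s : ℝ => s - θb) 1 t := (hasDerivAt_id t).sub_const θb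
    have h2 : HasDerivAt (fun s => Real.cos (s - θb)) (-Real.sin (t - θb) * 1) t :=
      (Real.hasDerivAt_cos _).comp t h1
    have h3 : HasDerivAt (fun s => ν * Real.cos (s - θb) / d)
        (ν * (-Real.sin (t - θb) * 1) / d) t := (h2.const_mul ν).div_const d
    have h4 : HasDerivAt M (C * (Real.exp (ν * Real.cos (t - θb) / d) * (ν * (-Real.sin (t - θb) * 1) / d))) t :=
      ((Real.hasDerivAt_exp _).comp t h3).const_mul C
    convert h4 using 1
    simp only [hM'def, hMdef]
    ring
  have hfd : Differentiable ℝ f := hf.differentiable (by simp)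
  have hfinf : ContDiff ℝ (⊤ : ℕ∞) f := hf.of_le (by simp)
  have hf' : ContDiff ℝ (⊤ : ℕ∞) (deriv f) := (contDiff_infty_iff_deriv.mp hfinf).2
  have hf'd : Differentiable ℝ (deriv f) := hf'.differentiable (by simp)
  set g : ℝ → ℝ := fun t => f t / M t with hgdef
  set G : ℝ → ℝ := fun t => (deriv f t * M t - f t * M' t) / (M t) ^ 2 with hGdef
  have hg : ∀ t, HasDerivAt g (G t) t := fun t =>
    ((hfd t).hasDerivAt).div (hM t) (hMne t)
  set u : ℝ → ℝ := fun t => d * deriv f t + ν * (Real.sin (t - θb) * f t) with hudef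
  have hsin : ∀ t, HasDerivAt (fun s => Real.sin (s - θb) * f s)
      (Real.cos (t - θb) * 1 * f t + Real.sin (t - θb) * deriv f t) t := by
    intro t
    have h1 : HasDerivAt (fun s : ℝ => s - θb) 1 t := (hasDerivAt_id t).sub_const θb
    exact ((Real.hasDerivAt_sin _).comp t h1).mul (hfd t).hasDerivAt
  set w : ℝ → ℝ := fun t => d * deriv (deriv f) t +
      ν * (Real.cos (t - θb) * 1 * f t + Real.sin (t - θb) * deriv f t) with hwdef
  have hu : ∀ t, HasDerivAt u (w t) t := fun t =>
    (((hf'd t).hasDerivAt).const_mul d).add ((hsin t).const_mul ν)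
  -- u = d * M * G
  have key : ∀ t, u t = d * (M t * G t) := by
    intro t
    simp only [hudef, hGdef, hM'def]
    have := hMne t
    field_simp
    ring
  -- periodicity
  have hMper : ∀ t, M (t + 2 * Real.pi) = M t := by
    intro t
    simp only [hMdef]
    rw [show t + 2 * Real.pi - θb = t - θb + 2 * Real.pi by ring, Real.cos_add_two_pi]
  have hfper' : ∀ t, deriv f (t + 2 * Real.pi) = deriv f t := by
    intro t
    have h1 : HasDerivAt (fun s => f (s + 2 * Real.pi)) (deriv f (t + 2 * Real.pi) * 1) t :=
      (hfd (t + 2 * Real.pi)).hasDerivAt.comp t ((hasDerivAt_id t).add_const (2 * Real.pi))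
    have h2 : (fun s => f (s + 2 * Real.pi)) = f := funext fun s => hper s
    rw [h2] at h1
    simpa using h1.deriv.symm
  have huper : ∀ t, u (t + 2 * Real.pi) = u t := by
    intro t
    simp only [hudef]
    rw [show t + 2 * Real.pi - θb = t - θb + 2 * Real.pi by ring, Real.sin_add_two_pi,
      hper t, hfper' t]
  have hgper : ∀ t, g (t + 2 * Real.pi) = g t := by
    intro t
    simp only [hgdef]
    rw [hper t, hMper t]
  have hpi : (-Real.pi) + 2 * Real.pi = Real.pi := by ring
  have huB : u Real.pi = u (-Real.pi) := by rw [← huper (-Real.pi), hpi]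
  have hgB : g Real.pi = g (-Real.pi) := by rw [← hgper (-Real.pi), hpi]
  -- continuity / integrability
  have hMc : Continuous M := by fun_prop
  have hM'c : Continuous M' := by fun_prop
  have hGc : Continuous G := by
    apply Continuous.div (by fun_prop) (by fun_prop)
    intro t; positivity
  have hwc : Continuous w := by
    have := hf'.continuous_deriv (by exact_mod_cast le_top)
    fun_prop
  have hwint : IntervalIntegrable w MeasureTheory.volume (-Real.pi) Real.pi :=
    hwc.intervalIntegrable _ _
  have hGint : IntervalIntegrable G MeasureTheory.volume (-Real.pi) Real.pi :=
    hGc.intervalIntegrable _ _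
  -- rewrite the integrand
  have hrw : (∫ θ in (-Real.pi)..Real.pi,
        (d * deriv (deriv f) θ + ν * deriv (fun t => Real.sin (t - θb) * f t) θ) *
          (f θ / (C * Real.exp (ν * Real.cos (θ - θb) / d)))) =
      ∫ θ in (-Real.pi)..Real.pi, w θ * g θ := by
    apply intervalIntegral.integral_congr
    intro θ _
    dsimp only
    rw [(hsin θ).deriv]
  rw [hrw]
  -- integration by parts
  have hibp := intervalIntegral.integral_mul_deriv_eq_deriv_mul
    (u := u) (v := g) (u' := w) (v' := G) (a := -Real.pi) (b := Real.pi)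
    (fun x _ => hu x) (fun x _ => hg x) hwint hGint
  have hnn : 0 ≤ ∫ θ in (-Real.pi)..Real.pi, u θ * G θ := by
    apply intervalIntegral.integral_nonneg (by linarith [Real.pi_pos])
    intro x _
    have h : u x * G x = d * M x * G x ^ 2 := by rw [key]; ring
    rw [h]
    have := hMpos x
    positivity
  have hB : u Real.pi * g Real.pi - u (-Real.pi) * g (-Real.pi) = 0 := by
    rw [huB, hgB]; ring
  linarith [hibp]
end

section
/- Let 0 < r < 1, let z ∈ ℂ with |z| = 1, and let k ≥ 1 be an integer. Then the series Σ_{m ∈ ℤ, m ≠ 0} r^{|m−k|} z^m / m converges and equals r^k · Log(1 − r z^{−1}) + Σ_{m=1}^{k} (r^{k−m} − r^{m−k}) z^m / m − r^{−k} · Log(1 − r z), where Log denotes the principal branch of the complex logarithm. -/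
open Complex Finset

/-!
Split the sum over `ℤ` into `m ≥ 0` and `m ≤ 0` (the term at `m = 0` is `0` either way, as
division by `0` gives `0`). For `m ≤ 0` the coefficient is `r ^ k * (r * z⁻¹) ^ (-m) / m`, so
that half is `r ^ k` times the series of `Log (1 - r z⁻¹)`. For `m ≥ 0` write
`r ^ |m - k| = r ^ (m - k) + [m ≤ k] (r ^ (k - m) - r ^ (m - k))`: the first part gives
`-r ^ (-k) Log (1 - r z)`, the correction is a finite sum.
-/

theorem pow_natAbs_sub {G : Type*} [DivInvMonoid G] (r : G) (a b : ℤ) :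
    r ^ (a - b).natAbs = if a ≤ b then r ^ (b - a) else r ^ (a - b) := by
  split_ifs with h
  · rw [← Int.natAbs_neg, neg_sub, ← zpow_natCast, Int.natAbs_of_nonneg (by omega)]
  · rw [← zpow_natCast, Int.natAbs_of_nonneg (by omega)]

theorem pow_natAbs_natCast_sub_eq {K : Type*} [DivisionRing K] {r : K} (hr : r ≠ 0) (m k : ℕ) :
    r ^ ((m : ℤ) - k).natAbs =
      r ^ (-(k : ℤ)) * r ^ m + if m ≤ k then r ^ ((k : ℤ) - m) - r ^ ((m : ℤ) - k) else 0 := by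
  have hsplit : r ^ ((m : ℤ) - k) = r ^ (-(k : ℤ)) * r ^ m := by
    rw [← zpow_natCast, ← zpow_add₀ hr, neg_add_eq_sub]
  rw [pow_natAbs_sub, ← hsplit]
  split_ifs <;> simp_all

section

variable {r z : ℂ} {k : ℕ}

theorem hasSum_pow_natAbs_natCast_sub_mul_pow_div (hr : r ≠ 0) (hrz : ‖r * z‖ < 1) :
    HasSum (fun m : ℕ => r ^ ((m : ℤ) - k).natAbs * z ^ m / m)
      ((∑ m ∈ Icc 1 k, (r ^ ((k : ℤ) - m) - r ^ ((m : ℤ) - k)) * z ^ m / m) -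
        r ^ (-(k : ℤ)) * log (1 - r * z)) := by
  have hlog := (hasSum_taylorSeries_neg_log hrz).mul_left (r ^ (-(k : ℤ)))
  have hfin := hasSum_sum_of_ne_finset_zero (L := .unconditional ℕ) (s := Icc 1 k)
    (f := fun m : ℕ =>
      if m ∈ Icc 1 k then (r ^ ((k : ℤ) - m) - r ^ ((m : ℤ) - k)) * z ^ m / m else 0)
    fun m hm => if_neg hm
  rw [sum_ite_mem, inter_self] at hfin
  have hsum := hlog.add hfin
  rw [mul_neg, neg_add_eq_sub] at hsum
  refine hsum.congr_fun fun m => ?_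
  rcases m.eq_zero_or_pos with rfl | hm
  · simp
  simp only [pow_natAbs_natCast_sub_eq hr, mem_Icc]
  split_ifs <;> first | omega | ring

theorem hasSum_pow_natAbs_neg_sub_mul_zpow_div (hrz : ‖r * z⁻¹‖ < 1) :
    HasSum (fun n : ℕ => r ^ (-(n : ℤ) - k).natAbs * z ^ (-(n : ℤ)) / ((-n : ℤ) : ℂ))
      (r ^ (k : ℤ) * log (1 - r * z⁻¹)) := by
  have hlog := ((hasSum_taylorSeries_neg_log hrz).mul_left (r ^ (k : ℤ))).neg
  rw [mul_neg, neg_neg] at hlog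
  refine hlog.congr_fun fun n => ?_
  have habs : (-(n : ℤ) - k).natAbs = n + k := by omega
  simp only [habs, pow_add, zpow_neg, zpow_natCast, mul_pow, inv_pow, Int.cast_neg,
    Int.cast_natCast]
  ring

end

theorem hasSum_rpow_zpow_div_general (r : ℝ) (hr0 : 0 < r) (hr1 : r < 1) (z : ℂ)
    (hz : ‖z‖ = 1) (k : ℕ) :
    HasSum
      (fun m : ℤ => if m = 0 then 0 else (r : ℂ) ^ (m - (k : ℤ)).natAbs * z ^ m / (m : ℂ))
      ((r : ℂ) ^ (k : ℤ) * Complex.log (1 - (r : ℂ) * z⁻¹) +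
        (∑ m ∈ Finset.Icc 1 k,
          ((r : ℂ) ^ ((k : ℤ) - (m : ℤ)) - (r : ℂ) ^ ((m : ℤ) - (k : ℤ))) * z ^ (m : ℕ) / (m : ℂ)) -
        (r : ℂ) ^ (-(k : ℤ)) * Complex.log (1 - (r : ℂ) * z)) := by
  have hr : ‖(r : ℂ)‖ < 1 := by simpa [abs_of_pos hr0] using hr1
  have hpos := hasSum_pow_natAbs_natCast_sub_mul_pow_div (k := k) (z := z)
    (ofReal_ne_zero.2 hr0.ne') (by simpa [hz] using hr)
  have hneg := hasSum_pow_natAbs_neg_sub_mul_zpow_div (k := k) (r := (r : ℂ)) (z := z)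
    (by simpa [hz] using hr)
  have hall := HasSum.of_nat_of_neg
    (f := fun m : ℤ => (r : ℂ) ^ (m - (k : ℤ)).natAbs * z ^ m / (m : ℂ))
    (by simpa only [zpow_natCast, Int.cast_natCast] using hpos) hneg
  rw [Int.cast_zero, div_zero, sub_zero, add_comm, ← add_sub_assoc] at hall
  refine hall.congr_fun fun m => ?_
  split_ifs with h <;> simp [h]

/-- For `0 < r < 1`, `|z| = 1` and an integer `k ≥ 1`, the series
`Σ_{m ∈ ℤ, m ≠ 0} r^{|m−k|} z^m / m` converges (unconditionally) to
`r^k Log(1 − r z⁻¹) + Σ_{m=1}^{k} (r^{k−m} − r^{m−k}) z^m / m − r^{−k} Log(1 − r z)`,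
where `Log` is the principal branch of the complex logarithm. -/
theorem hasSum_rpow_zpow_div (r : ℝ) (hr0 : 0 < r) (hr1 : r < 1) (z : ℂ)
    (hz : ‖z‖ = 1) (k : ℕ) (hk : 1 ≤ k) :
    HasSum
      (fun m : ℤ => if m = 0 then 0 else (r : ℂ) ^ (m - (k : ℤ)).natAbs * z ^ m / (m : ℂ))
      ((r : ℂ) ^ (k : ℤ) * Complex.log (1 - (r : ℂ) * z⁻¹) +
        (∑ m ∈ Finset.Icc 1 k,
          ((r : ℂ) ^ ((k : ℤ) - (m : ℤ)) - (r : ℂ) ^ ((m : ℤ) - (k : ℤ))) * z ^ (m : ℕ) / (m : ℂ)) -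
        (r : ℂ) ^ (-(k : ℤ)) * Complex.log (1 - (r : ℂ) * z)) :=
  hasSum_rpow_zpow_div_general r hr0 hr1 z hz k
end
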